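/- arXiv:2505.18998 — 4 statements merged into one kernel-verified Lean document; each statement's English description precedes it below -/
import Mathlib

section
/- A transition system T is SAFE (no bad state is reachable from an initial state) if and only if T admits a safe closed inductive trace. -/
/-- A transition system is SAFE iff it admits a safe closed inductive trace. -/
theorem stmt_1 {S : Type} (Init Bad : S → Prop) (Tr : S → S → Prop) :
    (∀ s : S, (∃ s0, Init s0 ∧ Relation.ReflTransGen Tr s0 s) → ¬ Bad s) ↔
    ∃ (N : ℕ) (F : ℕ → S → Prop),
      F 0 = Init ∧
      (∀ i < N, ∀ s s', F i s → Tr s s' → F (i + 1) s') ∧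
      (∀ i ≤ N, ∀ s, F i s → ¬ Bad s) ∧
      (∃ i, 1 ≤ i ∧ i ≤ N ∧ ∀ s, F i s → ∃ j < i, F j s) := by
  constructor
  · intro hsafe
    refine ⟨2, fun i s => if i = 0 then Init s else
      ∃ s0, Init s0 ∧ Relation.ReflTransGen Tr s0 s, by simp, ?_, ?_, ?_⟩
    · intro i _ s s' hs htr
      simp only [Nat.add_eq_zero, one_ne_zero, and_false, if_false]
      by_cases hi : i = 0
      · subst hi; simp at hs
        exact ⟨s, hs, Relation.ReflTransGen.single htr⟩
      · simp [hi] at hs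
        obtain ⟨s0, h0, hp⟩ := hs
        exact ⟨s0, h0, hp.tail htr⟩
    · intro i _ s hs
      by_cases hi : i = 0
      · subst hi; simp at hs
        exact hsafe s ⟨s, hs, Relation.ReflTransGen.refl⟩
      · simp [hi] at hs
        exact hsafe s hs
    · refine ⟨2, by norm_num, le_refl _, ?_⟩
      intro s hs
      exact ⟨1, by norm_num, by simpa using hs⟩
  · rintro ⟨N, F, hF0, hind, hsafe, i₀, hi1, hiN, hclosed⟩ s ⟨s0, h0, hpath⟩
    -- invariant: every reachable state satisfies some F j with j < i₀
    have key : ∀ t, Relation.ReflTransGen Tr s0 t → ∃ j < i₀, F j t := by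
      intro t hpath
      induction hpath with
      | refl => exact ⟨0, hi1, hF0 ▸ h0⟩
      | tail hbc htr ih =>
        obtain ⟨j, hj, hFj⟩ := ih
        have hjN : j < N := lt_of_lt_of_le hj hiN
        have hnext := hind j hjN _ _ hFj htr
        by_cases h : j + 1 < i₀
        · exact ⟨j + 1, h, hnext⟩
        · have : j + 1 = i₀ := le_antisymm (Nat.succ_le_of_lt hj) (not_lt.mp h)
          exact hclosed _ (this ▸ hnext)
    obtain ⟨j, hj, hFj⟩ := key s hpath
    exact hsafe j (le_trans (le_of_lt hj) hiN) s hFj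
end

section
/- (Auxiliary variable elimination) If Inv_1(V, ā) is a generalized safe inductive invariant for transition system T with auxiliary variables ā = {a_1,...,a_n}, n ≥ 1, where a_n has definition a_n ↔ l_1 ⋆ l_2, then Inv_2 := Inv_1[a_n ← l_1 ⋆ l_2] is a generalized safe inductive invariant for T with respect to the auxiliary variables ā* = ā \ {a_n} and auxiliary circuit E* obtained by dropping a_n's definition. -/
/-- Boolean formulas over variables of type `α`. -/
inductive BForm (α : Type) : Type
  | tru : BForm α
  | var : α → BForm α
  | not : BForm α → BForm α
  | and : BForm α → BForm α → BForm α
  | or : BForm α → BForm α → BForm α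
  | xor : BForm α → BForm α → BForm α

namespace BForm

def eval {α : Type} (z : α → Bool) : BForm α → Bool
  | tru => true
  | var v => z v
  | not p => !(p.eval z)
  | and p q => p.eval z && q.eval z
  | or p q => p.eval z || q.eval z
  | xor p q => Bool.xor (p.eval z) (q.eval z)

/-- Substitute formula `θ` for variable `a`. -/
def subst {α : Type} [DecidableEq α] (a : α) (θ : BForm α) : BForm α → BForm α
  | tru => tru
  | var v => if v = a then θ else var v
  | not p => not (subst a θ p)
  | and p q => and (subst a θ p) (subst a θ q)
  | or p q => or (subst a θ p) (subst a θ q)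
  | xor p q => xor (subst a θ p) (subst a θ q)

end BForm

/-- Literals: a variable together with a polarity. -/
abbrev Lit (α : Type) := α × Bool

def litEval {α : Type} (z : α → Bool) (l : Lit α) : Bool :=
  if l.2 then z l.1 else !(z l.1)

def negLit {α : Type} (l : Lit α) : Lit α := (l.1, !l.2)

def litForm {α : Type} (l : Lit α) : BForm α :=
  if l.2 then BForm.var l.1 else BForm.not (BForm.var l.1)

/-- `op = true` means ∧, `op = false` means ⊕. -/
def starEval (op : Bool) (b1 b2 : Bool) : Bool :=
  if op then b1 && b2 else Bool.xor b1 b2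

/-- The defining formula `l₁ ⋆ l₂` of an auxiliary variable. -/
def defForm {V : Type} {n : ℕ} (op : Fin n → Bool)
    (l1 l2 : Fin n → Lit (V ⊕ Fin n)) (i : Fin n) : BForm (V ⊕ Fin n) :=
  if op i then BForm.and (litForm (l1 i)) (litForm (l2 i))
  else BForm.xor (litForm (l1 i)) (litForm (l2 i))

/-- `z` satisfies the auxiliary circuit `E(V, ā) = ⋀ i, a_i ↔ l₁ᵢ ⋆ᵢ l₂ᵢ`. -/
def satE {V : Type} {n : ℕ} (op : Fin n → Bool) (l1 l2 : Fin n → Lit (V ⊕ Fin n))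
    (z : (V ⊕ Fin n) → Bool) : Prop :=
  ∀ i : Fin n, z (Sum.inr i) = starEval (op i) (litEval z (l1 i)) (litEval z (l2 i))

/-- Well-formedness: the definition of `a_i` uses only base variables and earlier
auxiliary variables. -/
def wfDefs {V : Type} {n : ℕ} (l1 l2 : Fin n → Lit (V ⊕ Fin n)) : Prop :=
  ∀ i : Fin n, (∀ j : Fin n, (l1 i).1 = Sum.inr j → j < i) ∧
    (∀ j : Fin n, (l2 i).1 = Sum.inr j → j < i)

/-- Restriction of an assignment over `V ∪ ā` to the base variables `V`. -/
def res {V : Type} {n : ℕ} (z : (V ⊕ Fin n) → Bool) : V → Bool :=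
  fun v => z (Sum.inl v)

lemma eval_subst {α : Type} [DecidableEq α] (a : α) (θ : BForm α)
    (z : α → Bool) : ∀ p : BForm α,
    (BForm.subst a θ p).eval z = p.eval (Function.update z a (θ.eval z))
  | BForm.tru => rfl
  | BForm.var v => by
      by_cases h : v = a
      · subst h; simp [BForm.subst, BForm.eval, Function.update_self]
      · simp [BForm.subst, h, BForm.eval, Function.update_of_ne h]
  | BForm.not p => by simp [BForm.subst, BForm.eval, eval_subst a θ z p]
  | BForm.and p q => by
      simp [BForm.subst, BForm.eval, eval_subst a θ z p, eval_subst a θ z q]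
  | BForm.or p q => by
      simp [BForm.subst, BForm.eval, eval_subst a θ z p, eval_subst a θ z q]
  | BForm.xor p q => by
      simp [BForm.subst, BForm.eval, eval_subst a θ z p, eval_subst a θ z q]

lemma defForm_eval {V : Type} {n : ℕ} (op : Fin n → Bool)
    (l1 l2 : Fin n → Lit (V ⊕ Fin n)) (i : Fin n) (z : (V ⊕ Fin n) → Bool) :
    BForm.eval z (defForm op l1 l2 i)
      = starEval (op i) (litEval z (l1 i)) (litEval z (l2 i)) := by
  unfold defForm litForm litEval starEval
  by_cases h : op i <;> rcases hp1 : (l1 i).2 <;> rcases hp2 : (l2 i).2 <;>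
    simp [h, hp1, hp2, BForm.eval]

lemma litEval_congr {α : Type} {z z' : α → Bool} (l : Lit α)
    (h : z l.1 = z' l.1) : litEval z l = litEval z' l := by
  unfold litEval; rw [h]

/-- Auxiliary variable elimination: substituting the last auxiliary variable by its
definition turns a generalized safe inductive invariant over `ā` into one over
`ā* = ā \ {aₙ}` (with the circuit `E*` obtained by dropping `aₙ`'s definition). -/
theorem stmt_5 {V : Type} [DecidableEq V] {n : ℕ} (hn : 0 < n)
    (Init Bad : (V → Bool) → Prop) (Tr : (V → Bool) → (V → Bool) → Prop)
    (op : Fin n → Bool) (l1 l2 : Fin n → Lit (V ⊕ Fin n))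
    (hwf : wfDefs l1 l2)
    (last : Fin n) (hlast : (last : ℕ) = n - 1)
    (Inv1 : BForm (V ⊕ Fin n))
    (h1 : ∀ z : (V ⊕ Fin n) → Bool,
      Init (res z) → satE op l1 l2 z → Inv1.eval z = true)
    (h2 : ∀ z z' : (V ⊕ Fin n) → Bool,
      Inv1.eval z = true → satE op l1 l2 z → Tr (res z) (res z') →
        satE op l1 l2 z' → Inv1.eval z' = true)
    (h3 : ∀ z : (V ⊕ Fin n) → Bool,
      Inv1.eval z = true → satE op l1 l2 z → ¬ Bad (res z))
    (Inv2 : BForm (V ⊕ Fin n))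
    (hInv2 : Inv2 = BForm.subst (Sum.inr last) (defForm op l1 l2 last) Inv1)
    (satEstar : ((V ⊕ Fin n) → Bool) → Prop)
    (hEstar : satEstar = fun z => ∀ i : Fin n, i < last →
      z (Sum.inr i) = starEval (op i) (litEval z (l1 i)) (litEval z (l2 i))) :
    (∀ z : (V ⊕ Fin n) → Bool, Init (res z) → satEstar z → Inv2.eval z = true) ∧
    (∀ z z' : (V ⊕ Fin n) → Bool,
      Inv2.eval z = true → satEstar z → Tr (res z) (res z') →
        satEstar z' → Inv2.eval z' = true) ∧
    (∀ z : (V ⊕ Fin n) → Bool, Inv2.eval z = true → satEstar z → ¬ Bad (res z)) := by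
  subst hInv2 hEstar
  set θ := defForm op l1 l2 last with hθ
  -- key: the hat assignment
  have hlt : ∀ i : Fin n, i ≠ last → i < last := by
    intro i hi
    have h1 : (i : ℕ) < n := i.isLt
    have h2 : (i : ℕ) ≠ n - 1 := by
      intro h; apply hi; apply Fin.ext; rw [h, hlast]
    have : (i : ℕ) < n - 1 := by omega
    exact Fin.lt_def.mpr (by rw [hlast]; exact this)
  have key : ∀ z : (V ⊕ Fin n) → Bool,
      (∀ i : Fin n, i < last →
        z (Sum.inr i) = starEval (op i) (litEval z (l1 i)) (litEval z (l2 i))) →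
      ∃ w : (V ⊕ Fin n) → Bool, satE op l1 l2 w ∧ res w = res z ∧
        (BForm.subst (Sum.inr last) θ Inv1).eval z = Inv1.eval w := by
    intro z hz
    refine ⟨Function.update z (Sum.inr last) (θ.eval z), ?_, ?_, ?_⟩
    · intro i
      set w := Function.update z (Sum.inr last) (θ.eval z) with hw
      have hlit : ∀ (l : Lit (V ⊕ Fin n)),
          (∀ j : Fin n, l.1 = Sum.inr j → j < last ∨ (j < i ∧ i ≤ last)) →
          litEval w l = litEval z l := by
        intro l hl
        apply litEval_congr
        rcases hll : l.1 with v | j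
        · rw [hw]; exact Function.update_of_ne (by simp) _ _
        · have hj := hl j hll
          have hne : Sum.inr j ≠ (Sum.inr last : V ⊕ Fin n) := by
            simp only [ne_eq, Sum.inr.injEq]
            rcases hj with h | ⟨h1, h2⟩
            · exact ne_of_lt h
            · exact ne_of_lt (lt_of_lt_of_le h1 h2)
          rw [hw]; exact Function.update_of_ne hne _ _
      by_cases hi : i = last
      · subst hi
        have hw_i : w (Sum.inr i) = θ.eval z := by
          rw [hw]; exact Function.update_self _ _ _
        have hl1 : litEval w (l1 i) = litEval z (l1 i) := by
          apply hlit; intro j hj; exact Or.inr ⟨(hwf i).1 j hj, le_refl i⟩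
        have hl2 : litEval w (l2 i) = litEval z (l2 i) := by
          apply hlit; intro j hj; exact Or.inr ⟨(hwf i).2 j hj, le_refl i⟩
        rw [hw_i, hl1, hl2, hθ, defForm_eval]
      · have hilt := hlt i hi
        have hl1 : litEval w (l1 i) = litEval z (l1 i) := by
          apply hlit; intro j hj; exact Or.inl (lt_trans ((hwf i).1 j hj) hilt)
        have hl2 : litEval w (l2 i) = litEval z (l2 i) := by
          apply hlit; intro j hj; exact Or.inl (lt_trans ((hwf i).2 j hj) hilt)
        have hw_i : w (Sum.inr i) = z (Sum.inr i) := by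
          rw [hw]
          exact Function.update_of_ne (by simp [ne_eq, Sum.inr.injEq]; exact hi) _ _
        rw [hw_i, hl1, hl2]
        exact hz i hilt
    · funext v
      unfold res
      exact Function.update_of_ne (by simp) _ _
    · exact eval_subst _ _ _ _
  refine ⟨?_, ?_, ?_⟩
  · intro z hInit hz
    obtain ⟨w, hE, hres, heq⟩ := key z hz
    rw [heq]
    exact h1 w (by rw [hres]; exact hInit) hE
  · intro z z' hinv hz htr hz'
    obtain ⟨w, hE, hres, heq⟩ := key z hz
    obtain ⟨w', hE', hres', heq'⟩ := key z' hz'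
    rw [heq']
    rw [heq] at hinv
    exact h2 w w' hinv hE (by rw [hres, hres']; exact htr) hE'
  · intro z hinv hz
    obtain ⟨w, hE, hres, heq⟩ := key z hz
    rw [heq] at hinv
    rw [← hres]
    exact h3 w hinv hE
end

section
/- If there exists a generalized safe inductive invariant Inv_g(V, ā) for a transition system T (with any finite set of auxiliary variables ā and auxiliary circuit E), then there exists a safe inductive invariant Inv(V) for T expressed purely over the state variables V. -/
/-- Value of a literal given base assignment `s` and values `f` for auxiliaries. -/
def litVal' {V : Type} {n : ℕ} (s : V → Bool) (f : ℕ → Bool) (l : Lit (V ⊕ Fin n)) : Bool :=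
  let b : Bool := match l.1 with
    | Sum.inl v => s v
    | Sum.inr j => f j.val
  if l.2 then b else !b

/-- Canonical extension of `s` to the auxiliary variables. -/
def extAssign {V : Type} {n : ℕ} (s : V → Bool) (op : Fin n → Bool)
    (l1 l2 : Fin n → Lit (V ⊕ Fin n)) (k : ℕ) : Bool :=
  if hk : k < n then
    let f : ℕ → Bool := fun m => if _ : m < k then extAssign s op l1 l2 m else false
    starEval (op ⟨k, hk⟩) (litVal' s f (l1 ⟨k, hk⟩)) (litVal' s f (l2 ⟨k, hk⟩))
  else false
termination_by k

theorem ext_sat {V : Type} {n : ℕ} (s : V → Bool) (op : Fin n → Bool)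
    (l1 l2 : Fin n → Lit (V ⊕ Fin n)) (hwf : wfDefs l1 l2) :
    satE op l1 l2 (Sum.elim s (fun i => extAssign s op l1 l2 i.val)) := by
  intro i
  set z : (V ⊕ Fin n) → Bool := Sum.elim s (fun i => extAssign s op l1 l2 i.val) with hz
  have hlit : ∀ l : Lit (V ⊕ Fin n),
      (∀ j : Fin n, l.1 = Sum.inr j → j < i) →
      litEval z l = litVal' s (fun m => if _ : m < i.val then extAssign s op l1 l2 m else false) l := by
    intro l hl
    unfold litEval litVal'
    rcases l with ⟨x, b⟩
    cases x with
    | inl v => simp [hz]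
    | inr j =>
      have hj : j < i := hl j rfl
      simp [hz, hj, Fin.lt_def.mp hj]
  have h1 := hlit (l1 i) (hwf i).1
  have h2 := hlit (l2 i) (hwf i).2
  show z (Sum.inr i) = _
  have : z (Sum.inr i) = extAssign s op l1 l2 i.val := rfl
  rw [this, extAssign]
  simp only [i.isLt, dif_pos]
  rw [h1, h2]

/-- If there exists a generalized safe inductive invariant for `T` (with some finite
set of auxiliary variables and auxiliary circuit), then there exists a safe inductive
invariant for `T` expressed purely over the state variables `V`. -/
theorem stmt_6 {V : Type} [DecidableEq V]
    (Init Bad : (V → Bool) → Prop) (Tr : (V → Bool) → (V → Bool) → Prop)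
    (h : ∃ (n : ℕ) (op : Fin n → Bool) (l1 l2 : Fin n → Lit (V ⊕ Fin n)),
      wfDefs l1 l2 ∧
      ∃ Invg : BForm (V ⊕ Fin n),
        (∀ z : (V ⊕ Fin n) → Bool,
          Init (res z) → satE op l1 l2 z → Invg.eval z = true) ∧
        (∀ z z' : (V ⊕ Fin n) → Bool,
          Invg.eval z = true → satE op l1 l2 z → Tr (res z) (res z') →
            satE op l1 l2 z' → Invg.eval z' = true) ∧
        (∀ z : (V ⊕ Fin n) → Bool,
          Invg.eval z = true → satE op l1 l2 z → ¬ Bad (res z))) :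
    ∃ Inv : (V → Bool) → Prop,
      (∀ s, Init s → Inv s) ∧
      (∀ s s', Inv s → Tr s s' → Inv s') ∧
      (∀ s, Inv s → ¬ Bad s) := by
  obtain ⟨n, op, l1, l2, hwf, Invg, hinit, hind, hsafe⟩ := h
  refine ⟨fun s => ∃ z, res z = s ∧ satE op l1 l2 z ∧ Invg.eval z = true, ?_, ?_, ?_⟩
  · intro s hs
    refine ⟨Sum.elim s (fun i => extAssign s op l1 l2 i.val), rfl, ext_sat s op l1 l2 hwf, ?_⟩
    exact hinit _ hs (ext_sat s op l1 l2 hwf)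
  · rintro s s' ⟨z, rfl, hzE, hzI⟩ htr
    refine ⟨Sum.elim s' (fun i => extAssign s' op l1 l2 i.val), rfl, ext_sat s' op l1 l2 hwf, ?_⟩
    exact hind z _ hzI hzE htr (ext_sat s' op l1 l2 hwf)
  · rintro s ⟨z, rfl, hzE, hzI⟩
    exact hsafe z hzI hzE
end

section
/- Let c be a clause over variables V ∪ ā with respect to an auxiliary circuit E. If there exists a literal l ∈ c such that coi(l) ∩ coi(c_2) = ∅ for a clause c_2 (where coi denotes the set of base variables in V on which a literal's definition depends), and c_2 is satisfiable and falsifiable over its COI, then c does not imply c_2 modulo E; i.e., there is an assignment satisfying E ∧ c ∧ ¬c_2. -/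
section Helpers

variable {V : Type} {n : ℕ}

/-- Build the values of auxiliary variables from a base assignment. -/
def mkAux (op : Fin n → Bool) (l1 l2 : Fin n → Lit (V ⊕ Fin n)) (x : V → Bool)
    (i : Fin n) : Bool :=
  starEval (op i)
    (match l1 i with
     | (Sum.inl v, b) => if b then x v else !(x v)
     | (Sum.inr j, b) =>
       if h : j < i then (if b then mkAux op l1 l2 x j else !(mkAux op l1 l2 x j)) else true)
    (match l2 i with
     | (Sum.inl v, b) => if b then x v else !(x v)
     | (Sum.inr j, b) =>
       if h : j < i then (if b then mkAux op l1 l2 x j else !(mkAux op l1 l2 x j)) else true)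
termination_by i.val
decreasing_by all_goals exact h

/-- Extend a base assignment to a full assignment respecting the circuit. -/
def mkZ (op : Fin n → Bool) (l1 l2 : Fin n → Lit (V ⊕ Fin n)) (x : V → Bool) :
    (V ⊕ Fin n) → Bool
  | Sum.inl v => x v
  | Sum.inr i => mkAux op l1 l2 x i

lemma mkZ_satE (op : Fin n → Bool) (l1 l2 : Fin n → Lit (V ⊕ Fin n)) (x : V → Bool)
    (hwf : wfDefs l1 l2) : satE op l1 l2 (mkZ op l1 l2 x) := by
  intro i
  show mkAux op l1 l2 x i = _
  rw [mkAux]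
  congr 1
  · rcases h1 : l1 i with ⟨v | j, b⟩
    · simp [litEval, mkZ, h1]
    · have hj : j < i := (hwf i).1 j (by rw [h1])
      simp [litEval, mkZ, h1, hj]
  · rcases h2 : l2 i with ⟨v | j, b⟩
    · simp [litEval, mkZ, h2]
    · have hj : j < i := (hwf i).2 j (by rw [h2])
      simp [litEval, mkZ, h2, hj]

lemma aux_congr (op : Fin n → Bool) (l1 l2 : Fin n → Lit (V ⊕ Fin n))
    (hwf : wfDefs l1 l2) (coi : Lit (V ⊕ Fin n) → Set V)
    (hcoiBase : ∀ (v : V) (b : Bool), coi (Sum.inl v, b) = {v})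
    (hcoiAux : ∀ (i : Fin n) (b : Bool),
      coi (Sum.inr i, b) = coi (l1 i) ∪ coi (l2 i))
    {z z' : (V ⊕ Fin n) → Bool} (hz : satE op l1 l2 z) (hz' : satE op l1 l2 z') :
    ∀ i : Fin n, (∀ v ∈ coi (l1 i) ∪ coi (l2 i), z (Sum.inl v) = z' (Sum.inl v)) →
      z (Sum.inr i) = z' (Sum.inr i) := by
  have main : ∀ k : ℕ, ∀ i : Fin n, i.val = k →
      (∀ v ∈ coi (l1 i) ∪ coi (l2 i), z (Sum.inl v) = z' (Sum.inl v)) →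
      z (Sum.inr i) = z' (Sum.inr i) := by
    intro k
    induction k using Nat.strong_induction_on with
    | _ k ih' =>
    intro i hik hag
    have ih : ∀ j : Fin n, j < i →
        (∀ v ∈ coi (l1 j) ∪ coi (l2 j), z (Sum.inl v) = z' (Sum.inl v)) →
        z (Sum.inr j) = z' (Sum.inr j) :=
      fun j hj => ih' j.val (hik ▸ hj) j rfl
    rw [hz i, hz' i]
    have key : ∀ (m : Lit (V ⊕ Fin n)), coi m ⊆ coi (l1 i) ∪ coi (l2 i) →
        (∀ j : Fin n, m.1 = Sum.inr j → j < i) → litEval z m = litEval z' m := by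
      rintro ⟨s, b⟩ hsub hlt
      rcases s with v | j
      · have hv : v ∈ coi (l1 i) ∪ coi (l2 i) := hsub (by rw [hcoiBase]; rfl)
        simp [litEval, hag v hv]
      · have hj : j < i := hlt j rfl
        have hzz : z (Sum.inr j) = z' (Sum.inr j) := by
          refine ih j hj ?_
          intro v hv
          exact hag v (hsub (by rw [hcoiAux j b]; exact hv))
        simp [litEval, hzz]
    congr 1
    · exact key (l1 i) Set.subset_union_left (hwf i).1
    · exact key (l2 i) Set.subset_union_right (hwf i).2
  intro i
  exact main i.val i rfl

lemma lit_congr (op : Fin n → Bool) (l1 l2 : Fin n → Lit (V ⊕ Fin n))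
    (hwf : wfDefs l1 l2) (coi : Lit (V ⊕ Fin n) → Set V)
    (hcoiBase : ∀ (v : V) (b : Bool), coi (Sum.inl v, b) = {v})
    (hcoiAux : ∀ (i : Fin n) (b : Bool),
      coi (Sum.inr i, b) = coi (l1 i) ∪ coi (l2 i))
    {z z' : (V ⊕ Fin n) → Bool} (hz : satE op l1 l2 z) (hz' : satE op l1 l2 z')
    (m : Lit (V ⊕ Fin n)) (hag : ∀ v ∈ coi m, z (Sum.inl v) = z' (Sum.inl v)) :
    litEval z m = litEval z' m := by
  rcases m with ⟨s, b⟩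
  rcases s with v | i
  · simp [litEval, hag v (by rw [hcoiBase]; rfl)]
  · have := aux_congr op l1 l2 hwf coi hcoiBase hcoiAux hz hz' i
      (fun v hv => hag v (by rw [hcoiAux i b]; exact hv))
    simp [litEval, this]

end Helpers

/-- COI-based non-implication: if clause `c` contains a literal `l` whose cone of
influence is disjoint from that of clause `c₂`, `l` can be set to true under `E`, and
`c₂` is satisfiable and falsifiable under `E`, then `c` does not imply `c₂` modulo
`E`: some assignment satisfies `E ∧ c ∧ ¬c₂`. -/
theorem stmt_8 {V : Type} [DecidableEq V] {n : ℕ}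
    (op : Fin n → Bool) (l1 l2 : Fin n → Lit (V ⊕ Fin n))
    (hwf : wfDefs l1 l2)
    (coi : Lit (V ⊕ Fin n) → Set V)
    (hcoiBase : ∀ (v : V) (b : Bool), coi (Sum.inl v, b) = {v})
    (hcoiAux : ∀ (i : Fin n) (b : Bool),
      coi (Sum.inr i, b) = coi (l1 i) ∪ coi (l2 i))
    (c c2 : Finset (Lit (V ⊕ Fin n)))
    (l : Lit (V ⊕ Fin n)) (hl : l ∈ c)
    (hdisj : coi l ∩ (⋃ m ∈ c2, coi m) = ∅)
    (hlsat : ∃ z, satE op l1 l2 z ∧ litEval z l = true)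
    (hc2sat : ∃ z, satE op l1 l2 z ∧ ∃ m ∈ c2, litEval z m = true)
    (hc2fals : ∃ z, satE op l1 l2 z ∧ ∀ m ∈ c2, litEval z m = false) :
    ∃ z, satE op l1 l2 z ∧ (∃ m ∈ c, litEval z m = true) ∧
      ∀ m ∈ c2, litEval z m = false := by
  classical
  obtain ⟨z1, hz1, hl1⟩ := hlsat
  obtain ⟨z2, hz2, hc2⟩ := hc2fals
  set x : V → Bool := fun v => if v ∈ coi l then z1 (Sum.inl v) else z2 (Sum.inl v) with hx
  have hsat := mkZ_satE op l1 l2 x hwf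
  refine ⟨mkZ op l1 l2 x, hsat, ⟨l, hl, ?_⟩, ?_⟩
  · have : litEval (mkZ op l1 l2 x) l = litEval z1 l := by
      refine lit_congr op l1 l2 hwf coi hcoiBase hcoiAux hsat hz1 l ?_
      intro v hv
      show x v = z1 (Sum.inl v)
      simp [hx, hv]
    rw [this]; exact hl1
  · intro m hm
    have hdis : ∀ v ∈ coi m, v ∉ coi l := by
      intro v hv hvl
      have hmem : v ∈ coi l ∩ ⋃ m ∈ c2, coi m :=
        ⟨hvl, Set.mem_biUnion hm hv⟩
      rw [hdisj] at hmem
      exact hmem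
    have : litEval (mkZ op l1 l2 x) m = litEval z2 m := by
      refine lit_congr op l1 l2 hwf coi hcoiBase hcoiAux hsat hz2 m ?_
      intro v hv
      show x v = z2 (Sum.inl v)
      simp [hx, hdis v hv]
    rw [this]; exact hc2 m hm
end
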